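/- With α(t) = cos(η(t))·p + sin(η(t))·γ(t) as in the setup, the rectifying condition ⟨p, (1/w(t))·T'(t) − α(t)⟩ = 0 holds for all t ∈ ℝ if and only if η satisfies the differential equation sin(η(t))·η''(t) − 2·cos(η(t))·η'(t)² + cos(η(t))·sin²(η(t)) = 0 for all t ∈ ℝ. -/

import Mathlib

open Real

/-- The Minkowski scalar product on `ℝ⁴₁`:
`⟨x,y⟩ = -x₁y₁ + x₂y₂ + x₃y₃ + x₄y₄`. -/
noncomputable def mdot (x y : Fin 4 → ℝ) : ℝ :=
  -(x 0 * y 0) + x 1 * y 1 + x 2 * y 2 + x 3 * y 3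

/-!
Pairing with `p` turns the rectifying condition into a scalar equation. Since `⟨p, γ⟩ = 0`
and `⟨p, p⟩ = 1`, the height `⟨p, α⟩` is `cos η`, so `⟨p, T⟩ = (cos η)' / w` and
`⟨p, T'⟩ = ((cos η)' / w)'`. Differentiating, with `w² = sin² η - η'²`, gives
`⟨p, T'⟩ = (cos η · η'⁴ - sin³ η · η'') / w³`, and the condition `⟨p, T'⟩ / w = cos η`
clears to `sin² η · (sin η · η'' - 2 cos η · η'² + cos η · sin² η) = 0`.
-/

section Minkowski

lemma mdot_comm (x y : Fin 4 → ℝ) : mdot x y = mdot y x := by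
  simp only [mdot]; ring

lemma mdot_add_right (x y z : Fin 4 → ℝ) : mdot x (y + z) = mdot x y + mdot x z := by
  simp only [mdot, Pi.add_apply]; ring

lemma mdot_sub_right (x y z : Fin 4 → ℝ) : mdot x (y - z) = mdot x y - mdot x z := by
  simp only [mdot, Pi.sub_apply]; ring

lemma mdot_smul_right (x y : Fin 4 → ℝ) (a : ℝ) : mdot x (a • y) = a * mdot x y := by
  simp only [mdot, Pi.smul_apply, smul_eq_mul]; ring

lemma mdot_cos_smul_add_sin_smul {p v : Fin 4 → ℝ} (hp : mdot p p = 1) (hv : mdot v p = 0)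
    (a : ℝ) : mdot p (cos a • p + sin a • v) = cos a := by
  rw [mdot_add_right, mdot_smul_right, mdot_smul_right, hp, mdot_comm, hv]
  ring

lemma HasDerivAt.mdot_left (p : Fin 4 → ℝ) {f : ℝ → Fin 4 → ℝ} {f' : Fin 4 → ℝ} {t : ℝ}
    (hf : HasDerivAt f f' t) : HasDerivAt (fun s => mdot p (f s)) (mdot p f') t := by
  have hi : ∀ i, HasDerivAt (fun s => f s i) (f' i) t := fun i => hasDerivAt_pi.1 hf i
  exact ((((hi 0).const_mul (p 0)).neg.add ((hi 1).const_mul (p 1))).add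
    ((hi 2).const_mul (p 2))).add ((hi 3).const_mul (p 3))

lemma mdot_deriv_eq_of_hasDerivAt {p : Fin 4 → ℝ} {f : ℝ → Fin 4 → ℝ} {g : ℝ → ℝ} {g' t : ℝ}
    (hf : DifferentiableAt ℝ f t) (hfg : ∀ s, mdot p (f s) = g s) (hg : HasDerivAt g g' t) :
    mdot p (deriv f t) = g' := by
  have h := hf.hasDerivAt.mdot_left p
  simp only [hfg] at h
  exact h.unique hg

end Minkowski

section Scalar

variable {η w : ℝ → ℝ} {t : ℝ}

lemma hasDerivAt_sqrt_sin_sq_sub_deriv_sq (hη : DifferentiableAt ℝ η t)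
    (hη' : DifferentiableAt ℝ (deriv η) t) (ht : deriv η t ^ 2 < sin (η t) ^ 2)
    (hw : ∀ s, w s = √(sin (η s) ^ 2 - deriv η s ^ 2)) :
    HasDerivAt w ((sin (η t) * cos (η t) * deriv η t - deriv η t * deriv (deriv η) t) / w t) t := by
  have hu := (hη.hasDerivAt.sin.fun_pow 2).fun_sub (hη'.hasDerivAt.fun_pow 2)
  have h := hu.sqrt (sub_pos.2 ht).ne'
  rw [← funext hw, ← hw] at h
  convert h using 1
  push_cast
  ring

lemma hasDerivAt_neg_sin_mul_deriv_div (hη : DifferentiableAt ℝ η t)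
    (hη' : DifferentiableAt ℝ (deriv η) t) (ht : deriv η t ^ 2 < sin (η t) ^ 2)
    (hw : ∀ s, w s = √(sin (η s) ^ 2 - deriv η s ^ 2)) :
    HasDerivAt (fun s => -(sin (η s) * deriv η s) / w s)
      ((cos (η t) * deriv η t ^ 4 - sin (η t) ^ 3 * deriv (deriv η) t) / w t ^ 3) t := by
  have hu : 0 < sin (η t) ^ 2 - deriv η t ^ 2 := sub_pos.2 ht
  have hwpos : 0 < w t := by rw [hw]; exact sqrt_pos.2 hu
  have hwsq : w t ^ 2 = sin (η t) ^ 2 - deriv η t ^ 2 := by rw [hw]; exact sq_sqrt hu.le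
  have hnum := ((hη.hasDerivAt.sin).fun_mul hη'.hasDerivAt).fun_neg
  refine (hnum.div (hasDerivAt_sqrt_sin_sq_sub_deriv_sq hη hη' ht hw) hwpos.ne').congr_deriv ?_
  field_simp
  linear_combination (-sin (η t) * deriv (deriv η) t - cos (η t) * deriv η t ^ 2) * hwsq

lemma inv_mul_div_cube_sub_eq_zero_iff {s c d e W : ℝ} (hs : s ≠ 0) (hW : W ≠ 0)
    (hW2 : W ^ 2 = s ^ 2 - d ^ 2) :
    W⁻¹ * ((c * d ^ 4 - s ^ 3 * e) / W ^ 3) - c = 0 ↔ s * e - 2 * c * d ^ 2 + c * s ^ 2 = 0 := by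
  have key : (W⁻¹ * ((c * d ^ 4 - s ^ 3 * e) / W ^ 3) - c) * W ^ 4
      = -s ^ 2 * (s * e - 2 * c * d ^ 2 + c * s ^ 2) := by
    field_simp
    linear_combination (-c * (W ^ 2 + s ^ 2 - d ^ 2)) * hW2
  constructor
  · intro h
    simpa [h, hs] using key
  · intro h
    simpa [h, hW] using key.symm

end Scalar

theorem rectifying_condition_iff_eta_ode_general
    (p : Fin 4 → ℝ) (hp : mdot p p = 1)
    (γ : ℝ → Fin 4 → ℝ) (hγsm : ContDiff ℝ (⊤ : ℕ∞) γ)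
    (hγp : ∀ t, mdot (γ t) p = 0)
    (η : ℝ → ℝ) (hηsm : ContDiff ℝ (⊤ : ℕ∞) η)
    (hsinpos : ∀ t, 0 < Real.sin (η t))
    (htimelike : ∀ t, (deriv η t) ^ 2 < Real.sin (η t) ^ 2)
    (w : ℝ → ℝ)
    (hw : ∀ t, w t = Real.sqrt (Real.sin (η t) ^ 2 - (deriv η t) ^ 2))
    (α : ℝ → Fin 4 → ℝ)
    (hα : ∀ t, α t = Real.cos (η t) • p + Real.sin (η t) • γ t)
    (T : ℝ → Fin 4 → ℝ) (hT : ∀ t, T t = (w t)⁻¹ • deriv α t)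
    :
    (∀ t, mdot p ((w t)⁻¹ • deriv T t - α t) = 0) ↔
      (∀ t, Real.sin (η t) * deriv (deriv η) t
          - 2 * Real.cos (η t) * (deriv η t) ^ 2
          + Real.cos (η t) * Real.sin (η t) ^ 2 = 0) := by
  have hη : Differentiable ℝ η := hηsm.differentiable (by simp)
  have hη' : Differentiable ℝ (deriv η) :=
    (contDiff_infty_iff_deriv.1 hηsm).2.differentiable (by simp)
  have hαsm : ContDiff ℝ (⊤ : ℕ∞) α := by
    rw [funext hα]
    exact ((contDiff_cos.comp hηsm).smul contDiff_const).add ((contDiff_sin.comp hηsm).smul hγsm)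
  have hu t : 0 < sin (η t) ^ 2 - deriv η t ^ 2 := sub_pos.2 (htimelike t)
  have hwpos t : 0 < w t := by rw [hw]; exact sqrt_pos.2 (hu t)
  have hwd : Differentiable ℝ w := fun t =>
    (hasDerivAt_sqrt_sin_sq_sub_deriv_sq (hη t) (hη' t) (htimelike t) hw).differentiableAt
  have hTd : Differentiable ℝ T := by
    rw [funext hT]
    exact (hwd.inv fun t => (hwpos t).ne').smul
      ((contDiff_infty_iff_deriv.1 hαsm).2.differentiable (by simp))
  have hpα t : mdot p (α t) = cos (η t) := by
    rw [hα]; exact mdot_cos_smul_add_sin_smul hp (hγp t) (η t)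
  have hpT t : mdot p (T t) = -(sin (η t) * deriv η t) / w t := by
    rw [hT, mdot_smul_right, mdot_deriv_eq_of_hasDerivAt (hαsm.differentiable (by simp) t) hpα
      (hη t).hasDerivAt.cos]
    ring
  refine forall_congr' fun t => ?_
  rw [mdot_sub_right, mdot_smul_right, hpα, mdot_deriv_eq_of_hasDerivAt (hTd t) hpT
    (hasDerivAt_neg_sin_mul_deriv_div (hη t) (hη' t) (htimelike t) hw)]
  refine inv_mul_div_cube_sub_eq_zero_iff (hsinpos t).ne' (hwpos t).ne' ?_
  rw [hw]; exact sq_sqrt (hu t).le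

/-- The curve `α(t) = cos(η t) • p + sin(η t) • γ(t)` satisfies the rectifying
condition `⟨p, (1/w) T' - α⟩ = 0` iff `η` satisfies
`sin(η) η'' - 2 cos(η) (η')² + cos(η) sin²(η) = 0`. -/
theorem rectifying_condition_iff_eta_ode
    (p : Fin 4 → ℝ) (hp : mdot p p = 1)
    (γ : ℝ → Fin 4 → ℝ) (hγsm : ContDiff ℝ (⊤ : ℕ∞) γ)
    (hγ1 : ∀ t, mdot (γ t) (γ t) = 1)
    (hγp : ∀ t, mdot (γ t) p = 0)
    (hγ' : ∀ t, mdot (deriv γ t) (deriv γ t) = -1)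
    (η : ℝ → ℝ) (hηsm : ContDiff ℝ (⊤ : ℕ∞) η)
    (hsinpos : ∀ t, 0 < Real.sin (η t))
    (htimelike : ∀ t, (deriv η t) ^ 2 < Real.sin (η t) ^ 2)
    (w : ℝ → ℝ)
    (hw : ∀ t, w t = Real.sqrt (Real.sin (η t) ^ 2 - (deriv η t) ^ 2))
    (α : ℝ → Fin 4 → ℝ)
    (hα : ∀ t, α t = Real.cos (η t) • p + Real.sin (η t) • γ t)
    (T : ℝ → Fin 4 → ℝ) (hT : ∀ t, T t = (w t)⁻¹ • deriv α t)
    :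
    (∀ t, mdot p ((w t)⁻¹ • deriv T t - α t) = 0) ↔
      (∀ t, Real.sin (η t) * deriv (deriv η) t
          - 2 * Real.cos (η t) * (deriv η t) ^ 2
          + Real.cos (η t) * Real.sin (η t) ^ 2 = 0) :=
  rectifying_condition_iff_eta_ode_general p hp γ hγsm hγp η hηsm hsinpos htimelike w hw α hα T hT
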